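/- arXiv:1405.5427 — 3 statements merged into one kernel-verified Lean document; each statement's English description precedes it below -/
import Mathlib

section
/- Let T be a non-trivial subgroup of the symmetric group on Q = {1,…,q} and C(T) = {α(g) : g ∈ T} the associated permutation code in H(q,q). Then C(T) is equivalent to the repetition code Rep(q,q) (i.e., some automorphism of the Hamming graph maps C(T) onto Rep(q,q)) if and only if T acts regularly on Q. -/
/-- The automorphism of the Hamming graph `H(m,q)` determined by `h ∈ Sym(Q)^m` and
`σ ∈ Sym(Fin m)`: `(α^{hσ})_k = (α_{kσ⁻¹})^{h_{kσ⁻¹}}`. -/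
def hammAut {m : ℕ} {Q : Type*} (h : Fin m → Equiv.Perm Q) (σ : Equiv.Perm (Fin m)) :
    Equiv.Perm (Fin m → Q) :=
  (Equiv.piCongrRight h).trans (Equiv.arrowCongr σ (Equiv.refl Q))

/-!
Since `σ` only permutes coordinates, `α ↦ α^{hσ}` maps `C(T)` onto `Rep(q,q)` exactly when
`C(T)` is the set of words `α` with `h i (α i)` independent of `i`. If so, the identity and any
`g ∈ T` fixing `x` both lie in this set with the same constant `h x x`, so `g = 1`; and the
preimage of the constant word `h x y` is some `g ∈ T` with `g x = y`. Conversely, if `T` is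
regular then `t ↦ t i` identifies `T` with `Q` for each `i`, and reading `α i` back in `T` and
evaluating at a base point `x₀` gives relabellings `h i` with `h i (g i) = g x₀` for all `g ∈ T`.
-/

open Function Equiv

section HammingAutomorphism

variable {m : ℕ} {Q : Type*}

lemma hammAut_apply (h : Fin m → Perm Q) (σ : Perm (Fin m)) (α : Fin m → Q) (k : Fin m) :
    hammAut h σ α k = h (σ.symm k) (α (σ.symm k)) := rfl

lemma hammAut_preimage_constants (h : Fin m → Perm Q) (σ : Perm (Fin m)) :
    hammAut h σ ⁻¹' {α | ∃ c, α = fun _ => c} = {α | ∃ c, ∀ i, h i (α i) = c} := by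
  ext α
  simp only [Set.mem_preimage, Set.mem_ofPred_eq, funext_iff, hammAut_apply]
  exact exists_congr fun c => σ.symm.forall_congr_right (q := fun i => h i (α i) = c)

end HammingAutomorphism

section RegularSubgroup

variable {X : Type*} (T : Subgroup (Perm X))

theorem isRegular_of_eq_setOf_const (h : X → Perm X)
    (hC : {α : X → X | ∃ g ∈ T, α = ⇑g} = {α | ∃ c, ∀ i, h i (α i) = c}) :
    (∀ x y : X, ∃ g ∈ T, g x = y) ∧ (∀ x : X, ∀ g ∈ T, g x = x → g = 1) := by
  have mem_iff (α : X → X) : (∃ g ∈ T, α = ⇑g) ↔ ∃ c, ∀ i, h i (α i) = c :=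
    Set.ext_iff.mp hC α
  obtain ⟨c₁, hc₁⟩ := (mem_iff _).mp ⟨1, T.one_mem, rfl⟩
  constructor
  · intro x y
    obtain ⟨g, hg, hα⟩ := (mem_iff fun i => (h i).symm (h x y)).mpr ⟨h x y, by simp⟩
    refine ⟨g, hg, ?_⟩
    simpa using (congrFun hα x).symm
  · intro x g hg hgx
    obtain ⟨c, hc⟩ := (mem_iff g).mp ⟨g, hg, rfl⟩
    have hcc : c = c₁ := by rw [← hc x, ← hc₁ x, hgx, Perm.one_apply]
    ext i
    exact (h i).injective ((hc i).trans (hcc.trans (hc₁ i).symm))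

theorem bijective_eval_of_isRegular (htrans : ∀ x y : X, ∃ g ∈ T, g x = y)
    (hfree : ∀ x : X, ∀ g ∈ T, g x = x → g = 1) (i : X) :
    Bijective fun t : T => (t : Perm X) i := by
  refine ⟨fun t t' (htt' : (t : Perm X) i = (t' : Perm X) i) => ?_, fun y => ?_⟩
  · have hfix : ((t'⁻¹ * t : T) : Perm X) i = i := by
      simp only [Subgroup.coe_mul, Subgroup.coe_inv, Perm.mul_apply]
      rw [htt', Perm.inv_def, symm_apply_apply]
    exact (inv_mul_eq_one.mp (Subtype.ext (hfree i _ (t'⁻¹ * t).2 hfix))).symm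
  · obtain ⟨g, hg, hgy⟩ := htrans i y
    exact ⟨⟨g, hg⟩, hgy⟩

theorem exists_eq_setOf_const_of_isRegular [Nonempty X]
    (htrans : ∀ x y : X, ∃ g ∈ T, g x = y) (hfree : ∀ x : X, ∀ g ∈ T, g x = x → g = 1) :
    ∃ h : X → Perm X, {α : X → X | ∃ g ∈ T, α = ⇑g} = {α | ∃ c, ∀ i, h i (α i) = c} := by
  obtain ⟨x₀⟩ := ‹Nonempty X›
  let e : X → (T ≃ X) := fun i => ofBijective _ (bijective_eval_of_isRegular T htrans hfree i)
  have h_apply (i : X) (t : T) : (e i).symm.trans (e x₀) ((t : Perm X) i) = (t : Perm X) x₀ := by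
    change e x₀ ((e i).symm (e i t)) = _
    rw [symm_apply_apply]
    rfl
  refine ⟨fun i => (e i).symm.trans (e x₀), Set.ext fun α => ⟨?_, ?_⟩⟩
  · rintro ⟨g, hg, rfl⟩
    exact ⟨g x₀, fun i => h_apply i ⟨g, hg⟩⟩
  · rintro ⟨c, hc⟩
    let t := (e x₀).symm c
    have htc : (t : Perm X) x₀ = c := (e x₀).apply_symm_apply c
    refine ⟨t, t.2, funext fun i => ?_⟩
    exact ((e i).symm.trans (e x₀)).injective ((hc i).trans (htc ▸ (h_apply i t).symm))

end RegularSubgroup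

/-- For a non-trivial subgroup `T ≤ Sym(Fin q)`, the permutation code `C(T)` is equivalent
(under an automorphism of `H(q,q)`) to the repetition code iff `T` acts regularly. -/
theorem stmt_2 {q : ℕ} (T : Subgroup (Equiv.Perm (Fin q))) (hT : T ≠ ⊥) :
    (∃ (h : Fin q → Equiv.Perm (Fin q)) (σ : Equiv.Perm (Fin q)),
        (⇑(hammAut h σ)) '' {α : Fin q → Fin q | ∃ g ∈ T, α = ⇑g} =
          {α : Fin q → Fin q | ∃ c, α = fun _ => c}) ↔
      ((∀ x y : Fin q, ∃ g ∈ T, g x = y) ∧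
        (∀ x : Fin q, ∀ g ∈ T, g x = x → g = 1)) := by
  simp_rw [← Equiv.eq_preimage_iff_image_eq, hammAut_preimage_constants]
  constructor
  · rintro ⟨h, -, hC⟩
    exact isRegular_of_eq_setOf_const T h hC
  · rintro ⟨htrans, hfree⟩
    have : Nonempty (Fin q) := by
      by_contra hempty
      rw [not_nonempty_iff] at hempty
      exact hT (Subsingleton.elim _ _)
    obtain ⟨h, hC⟩ := exists_eq_setOf_const_of_isRegular T htrans hfree
    exact ⟨h, 1, hC⟩
end

section
/- Let C be an X-neighbour transitive code in H(m,q) with minimum distance δ ≥ 3 and let J be a block of an X-invariant partition of the coordinate set {1,…,m}. If the projected code π_J(C) is not the complete code (all of H(J,q)), then π_J(C) has minimum distance at least 2. -/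
/-- Distance from a vertex to a code. -/
noncomputable def distToCode {ι Q : Type*} [Fintype ι] [DecidableEq Q]
    (ν : ι → Q) (C : Set (ι → Q)) : ℕ :=
  sInf {d | ∃ β ∈ C, d = hammingDist ν β}

/-- `C` is `X`-neighbour transitive: `X` consists of Hamming graph automorphisms,
stabilises `C` setwise, and acts transitively on `C` and on the neighbour set `C₁`. -/
def NbrTrans {m : ℕ} {Q : Type*} [DecidableEq Q]
    (X : Subgroup (Equiv.Perm (Fin m → Q))) (C : Set (Fin m → Q)) : Prop :=
  (∀ x ∈ X, ∃ h σ, x = hammAut h σ) ∧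
  (∀ x ∈ X, (⇑x) '' C = C) ∧
  (∀ α ∈ C, ∀ β ∈ C, ∃ x ∈ X, x α = β) ∧
  (∀ ν₁ ν₂ : Fin m → Q, distToCode ν₁ C = 1 → distToCode ν₂ C = 1 →
    ∃ x ∈ X, x ν₁ = ν₂)

/-- Projection of a vertex of `H(m,q)` onto the coordinates in `J`. -/
def proj {m : ℕ} {Q : Type*} (J : Finset (Fin m)) (α : Fin m → Q) : J → Q :=
  fun j => α j

/-- Two functions differing at exactly one point have Hamming distance one. -/
lemma aux_dist_one_of {ι Q : Type*} [Fintype ι] [DecidableEq ι] [DecidableEq Q]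
    {f g : ι → Q} {k : ι} (h1 : f k ≠ g k) (h2 : ∀ i, i ≠ k → f i = g i) :
    hammingDist f g = 1 := by
  have hfil : (Finset.univ.filter fun i => f i ≠ g i) = {k} := by
    ext i
    simp only [Finset.mem_filter, Finset.mem_univ, true_and, Finset.mem_singleton]
    constructor
    · intro h; by_contra hi; exact h (h2 i hi)
    · rintro rfl; exact h1
  unfold hammingDist
  rw [hfil]
  simp

/-- Hamming distance one means differing at exactly one point. -/
lemma aux_exists_of_dist_one {ι Q : Type*} [Fintype ι] [DecidableEq ι] [DecidableEq Q]
    {f g : ι → Q} (h : hammingDist f g = 1) :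
    ∃ k, f k ≠ g k ∧ ∀ i, i ≠ k → f i = g i := by
  unfold hammingDist at h
  obtain ⟨k, hk⟩ := Finset.card_eq_one.mp h
  refine ⟨k, ?_, ?_⟩
  · have : k ∈ (Finset.univ.filter fun i => f i ≠ g i) := by rw [hk]; simp
    simpa using this
  · intro i hi
    by_contra hne
    have : i ∈ (Finset.univ.filter fun j => f j ≠ g j) := by simp [hne]
    rw [hk] at this
    exact hi (Finset.mem_singleton.mp this)

lemma aux_distToCode_eq_one {ι Q : Type*} [Fintype ι] [DecidableEq Q]
    {ν : ι → Q} {C : Set (ι → Q)} {α : ι → Q} (hα : α ∈ C)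
    (h1 : hammingDist ν α = 1) (hn : ν ∉ C) : distToCode ν C = 1 := by
  have hmem : 1 ∈ {d | ∃ β ∈ C, d = hammingDist ν β} := ⟨α, hα, h1.symm⟩
  have hle : distToCode ν C ≤ 1 := Nat.sInf_le hmem
  have h0 : distToCode ν C ≠ 0 := by
    unfold distToCode
    intro h0'
    rw [Nat.sInf_eq_zero] at h0'
    rcases h0' with ⟨β, hβ, hb⟩ | hemp
    · exact hn (by rw [hammingDist_eq_zero.mp hb.symm]; exact hβ)
    · rw [hemp] at hmem; exact hmem
  omega

lemma aux_hammAut_app {m : ℕ} {Q : Type*} (h : Fin m → Equiv.Perm Q)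
    (σ : Equiv.Perm (Fin m)) (f : Fin m → Q) (i : Fin m) :
    hammAut h σ f (σ i) = h i (f i) := by
  simp [hammAut, Equiv.arrowCongr]

/-- For an `X`-neighbour transitive code `C` with minimum distance `δ ≥ 3` and a block `J`
of an `X`-invariant partition of the coordinates: if `π_J(C)` is not the complete code then
`π_J(C)` has minimum distance at least `2`. -/
theorem stmt_9 {m : ℕ} {Q : Type*} [DecidableEq Q]
    (X : Subgroup (Equiv.Perm (Fin m → Q))) (C : Set (Fin m → Q))
    (hNT : NbrTrans X C) (δ : ℕ) (hδ3 : 3 ≤ δ)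
    (hδ : ∀ α ∈ C, ∀ β ∈ C, α ≠ β → δ ≤ hammingDist α β)
    (𝒥 : Finset (Finset (Fin m)))
    (hpart : ∀ k : Fin m, ∃! J', J' ∈ 𝒥 ∧ k ∈ J')
    (hinv : ∀ (h : Fin m → Equiv.Perm Q) (σ : Equiv.Perm (Fin m)),
      hammAut h σ ∈ X → ∀ J' ∈ 𝒥, J'.image σ ∈ 𝒥)
    (J : Finset (Fin m)) (hJ : J ∈ 𝒥)
    (hnc : (proj J) '' C ≠ Set.univ) :
    ∀ u ∈ (proj J) '' C, ∀ v ∈ (proj J) '' C, u ≠ v → 2 ≤ hammingDist u v := by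
  intro u hu v hv huv
  by_contra hlt
  push_neg at hlt
  have hpos : 0 < hammingDist u v := hammingDist_pos.mpr huv
  have hd1 : hammingDist u v = 1 := by omega
  obtain ⟨α, hα, rfl⟩ := hu
  obtain ⟨β, hβ, rfl⟩ := hv
  obtain ⟨j, hjne, hjeq⟩ := aux_exists_of_dist_one hd1
  -- `α` and `β` agree on `J` away from `↑j`, and differ at `↑j`
  have hαβJ : ∀ i ∈ J, i ≠ (j : Fin m) → α i = β i := by
    intro i hi hij
    exact hjeq ⟨i, hi⟩ (fun e => hij (congrArg Subtype.val e))
  have hab : α (j : Fin m) ≠ β (j : Fin m) := hjne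
  -- key claim: the projection of `C` is closed under changing one coordinate arbitrarily
  have key : ∀ γ ∈ C, ∀ k ∈ J, ∀ c : Q,
      ∃ γ' ∈ C, γ' k = c ∧ ∀ i ∈ J, i ≠ k → γ' i = γ i := by
    intro γ hγ k hk c
    by_cases hc : c = γ k
    · exact ⟨γ, hγ, hc.symm, fun i _ _ => rfl⟩
    set ν := Function.update γ k c with hνdef
    have hνk : ν k = c := Function.update_self _ _ _
    have hνi : ∀ i, i ≠ k → ν i = γ i := fun i hi => Function.update_of_ne hi _ _
    have hνγ : hammingDist ν γ = 1 := aux_dist_one_of (by rw [hνk]; exact hc) hνi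
    have hνC : ν ∉ C := by
      intro hνC
      have hne : ν ≠ γ := by
        intro h'; rw [h', hammingDist_self] at hνγ; exact one_ne_zero hνγ.symm
      have := hδ ν hνC γ hγ hne
      omega
    have hdν : distToCode ν C = 1 := aux_distToCode_eq_one hγ hνγ hνC
    set b := β (j : Fin m) with hbdef
    set ν₁ := Function.update α (j : Fin m) b with hν₁def
    have hν₁j : ν₁ (j : Fin m) = b := Function.update_self _ _ _
    have hν₁i : ∀ i, i ≠ (j : Fin m) → ν₁ i = α i := fun i hi => Function.update_of_ne hi _ _
    have hν₁α : hammingDist ν₁ α = 1 :=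
      aux_dist_one_of (by rw [hν₁j]; exact fun e => hab e.symm) hν₁i
    have hν₁C : ν₁ ∉ C := by
      intro hν₁C
      have hne : ν₁ ≠ α := by
        intro h'; rw [h', hammingDist_self] at hν₁α; exact one_ne_zero hν₁α.symm
      have := hδ ν₁ hν₁C α hα hne
      omega
    have hdν₁ : distToCode ν₁ C = 1 := aux_distToCode_eq_one hα hν₁α hν₁C
    obtain ⟨x, hxX, hxν⟩ := hNT.2.2.2 ν₁ ν hdν₁ hdν
    obtain ⟨h, σ, rfl⟩ := hNT.1 x hxX
    have hCfix : ∀ ⦃γ₀ : Fin m → Q⦄, γ₀ ∈ C → hammAut h σ γ₀ ∈ C := by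
      intro γ₀ h₀
      have himg := hNT.2.1 _ hxX
      rw [← himg]
      exact ⟨γ₀, h₀, rfl⟩
    have hxα : hammAut h σ α ∈ C := hCfix hα
    -- x α is at distance 1 from ν
    have hxαν : hammingDist (hammAut h σ α) ν = 1 := by
      rw [← hxν]
      apply aux_dist_one_of (k := σ (j : Fin m))
      · rw [aux_hammAut_app, aux_hammAut_app, hν₁j]
        intro e
        exact hab (((h _).injective e).symm ▸ rfl)
      · intro i' hi'
        have hrep : i' = σ (σ.symm i') := (Equiv.apply_symm_apply σ i').symm
        rw [hrep, aux_hammAut_app, aux_hammAut_app]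
        congr 1
        have hne : σ.symm i' ≠ (j : Fin m) := by
          intro e
          apply hi'
          rw [hrep, e]
        exact (hν₁i _ hne).symm
    -- x α = γ since both are codewords within distance 2 < δ
    have hxαγ : hammAut h σ α = γ := by
      by_contra hne
      have h3 := hδ _ hxα γ hγ hne
      have htri := hammingDist_triangle (hammAut h σ α) ν γ
      rw [hxαν, hνγ] at htri
      omega
    -- σ maps j to k
    have hσj : σ (j : Fin m) = k := by
      by_contra hne
      have h1 : ν (σ (j : Fin m)) = γ (σ (j : Fin m)) := hνi _ hne
      have h2 : hammAut h σ ν₁ (σ (j : Fin m)) ≠ hammAut h σ α (σ (j : Fin m)) := by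
        rw [aux_hammAut_app, aux_hammAut_app, hν₁j]
        intro e
        exact hab (((h _).injective e).symm ▸ rfl)
      rw [hxν, hxαγ] at h2
      exact h2 h1
    -- σ maps J onto J
    have hσJ : J.image σ = J := by
      have hmem : J.image σ ∈ 𝒥 := hinv h σ hxX J hJ
      have hk1 : k ∈ J.image σ := Finset.mem_image.mpr ⟨(j : Fin m), j.2, hσj⟩
      obtain ⟨J₀, _, huniq⟩ := hpart k
      rw [huniq _ ⟨hmem, hk1⟩, huniq _ ⟨hJ, hk⟩]
    refine ⟨hammAut h σ β, hCfix hβ, ?_, ?_⟩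
    · -- value at k is c
      have hval : hammAut h σ ν₁ (σ (j : Fin m)) = c := by rw [hxν, hσj, hνk]
      rw [aux_hammAut_app, hν₁j] at hval
      rw [← hσj, aux_hammAut_app, ← hbdef]
      exact hval
    · -- agrees with γ on J away from k
      intro i hi hik
      obtain ⟨i₀, hi₀J, hi₀⟩ : ∃ i₀ ∈ J, σ i₀ = i := by
        rw [← hσJ] at hi
        exact Finset.mem_image.mp hi
      subst hi₀
      rw [aux_hammAut_app, ← hxαγ, aux_hammAut_app]
      congr 1
      have hi₀j : i₀ ≠ (j : Fin m) := by rintro rfl; exact hik hσj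
      exact (hαβJ i₀ hi₀J hi₀j).symm
  -- from the key claim, the projection is the complete code: contradiction
  apply hnc
  rw [Set.eq_univ_iff_forall]
  have step : ∀ n : ℕ, ∀ γ ∈ C, ∀ w : J → Q,
      hammingDist (proj J γ) w ≤ n → ∃ γ' ∈ C, proj J γ' = w := by
    intro n
    induction n with
    | zero =>
      intro γ hγ w hw
      exact ⟨γ, hγ, hammingDist_eq_zero.mp (Nat.le_zero.mp hw)⟩
    | succ n ih =>
      intro γ hγ w hw
      by_cases he : proj J γ = w
      · exact ⟨γ, hγ, he⟩
      · obtain ⟨j₀, hj₀⟩ : ∃ j₀ : J, proj J γ j₀ ≠ w j₀ := Function.ne_iff.mp he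
        obtain ⟨γ'', hγ'', hkv, hoff⟩ := key γ hγ (j₀ : Fin m) j₀.2 (w j₀)
        apply ih γ'' hγ'' w
        have hsub : (Finset.univ.filter fun i : J => proj J γ'' i ≠ w i) ⊆
            (Finset.univ.filter fun i : J => proj J γ i ≠ w i).erase j₀ := by
          intro i hi
          simp only [Finset.mem_filter, Finset.mem_univ, true_and] at hi
          rw [Finset.mem_erase]
          have hij : i ≠ j₀ := by
            rintro rfl
            exact hi hkv
          refine ⟨hij, ?_⟩
          simp only [Finset.mem_filter, Finset.mem_univ, true_and]
          have : γ'' (i : Fin m) = γ (i : Fin m) :=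
            hoff (i : Fin m) i.2 (fun e => hij (Subtype.ext e))
          intro e
          apply hi
          show γ'' (i : Fin m) = w i
          rw [this]
          exact e
        have h1 := Finset.card_le_card hsub
        have h2 : j₀ ∈ (Finset.univ.filter fun i : J => proj J γ i ≠ w i) := by
          simp only [Finset.mem_filter, Finset.mem_univ, true_and]
          exact hj₀
        have h3 := Finset.card_erase_of_mem h2
        have h4 : 0 < (Finset.univ.filter fun i : J => proj J γ i ≠ w i).card :=
          Finset.card_pos.mpr ⟨j₀, h2⟩
        unfold hammingDist at hw ⊢
        omega
  intro w
  obtain ⟨γ', hγ', hpw⟩ := step (hammingDist (proj J α) w) α hα w le_rfl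
  exact ⟨γ', hγ', hpw⟩
end

section
/- Let C be a code in H(m,q) with minimum distance δ, and let Prod_ℓ(C) ⊆ H(mℓ,q) be the set of concatenations of ℓ codewords of C. If C is X-neighbour transitive, then Prod_ℓ(C) is (X wr S_ℓ)-neighbour transitive and has minimum distance δ. -/
/-- The minimum distance of a code. -/
noncomputable def minDist {ι Q : Type*} [Fintype ι] [DecidableEq Q] (C : Set (ι → Q)) : ℕ :=
  sInf {d | ∃ α ∈ C, ∃ β ∈ C, α ≠ β ∧ d = hammingDist α β}

/-- The element of `X wr S_ℓ` determined by `xs : Fin ℓ → Perm` and `τ`, acting on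
`H(mℓ,q)` (vertices identified with `ℓ`-tuples of vertices of `H(m,q)`) by applying the
`xs i` blockwise and permuting the blocks by `τ`. -/
def wrAct {m ℓ : ℕ} {Q : Type*} (xs : Fin ℓ → Equiv.Perm (Fin m → Q))
    (τ : Equiv.Perm (Fin ℓ)) : Equiv.Perm (Fin ℓ × Fin m → Q) :=
  (Equiv.curry (Fin ℓ) (Fin m) Q).trans
    (((Equiv.piCongrRight xs).trans
      (Equiv.arrowCongr τ (Equiv.refl (Fin m → Q)))).trans
        (Equiv.curry (Fin ℓ) (Fin m) Q).symm)

section Helpers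
variable {m ℓ : ℕ} {Q : Type*} [DecidableEq Q]

lemma wrAct_apply (xs : Fin ℓ → Equiv.Perm (Fin m → Q)) (τ : Equiv.Perm (Fin ℓ))
    (γ : Fin ℓ × Fin m → Q) (i : Fin ℓ) (j : Fin m) :
    wrAct xs τ γ (i, j) = xs (τ.symm i) (fun j' => γ (τ.symm i, j')) j := rfl

lemma wrAct_eq (xs : Fin ℓ → Equiv.Perm (Fin m → Q)) (τ : Equiv.Perm (Fin ℓ))
    (γ₁ γ₂ : Fin ℓ × Fin m → Q)
    (h : ∀ k, xs k (fun j => γ₁ (k, j)) = fun j => γ₂ (τ k, j)) :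
    wrAct xs τ γ₁ = γ₂ := by
  funext p
  obtain ⟨i, j⟩ := p
  rw [wrAct_apply]
  have := congrFun (h (τ.symm i)) j
  simpa [Equiv.apply_symm_apply] using this

lemma hdist_block_sum (γ₁ γ₂ : Fin ℓ × Fin m → Q) :
    hammingDist γ₁ γ₂ = ∑ i, hammingDist (fun j => γ₁ (i, j)) (fun j => γ₂ (i, j)) := by
  simp only [hammingDist, Finset.card_filter, Fintype.sum_prod_type]

lemma mem_of_img {X : Subgroup (Equiv.Perm (Fin m → Q))} {C : Set (Fin m → Q)}
    (hX : ∀ x ∈ X, (⇑x) '' C = C) {x : Equiv.Perm (Fin m → Q)} (hx : x ∈ X)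
    {α : Fin m → Q} (hα : α ∈ C) : x α ∈ C := by
  have : x α ∈ (⇑x) '' C := ⟨α, hα, rfl⟩
  rwa [hX x hx] at this

lemma symm_mem_of_img {X : Subgroup (Equiv.Perm (Fin m → Q))} {C : Set (Fin m → Q)}
    (hX : ∀ x ∈ X, (⇑x) '' C = C) {x : Equiv.Perm (Fin m → Q)} (hx : x ∈ X)
    {α : Fin m → Q} (hα : α ∈ C) : x.symm α ∈ C := by
  rw [← hX x hx] at hα
  obtain ⟨β, hβ, rfl⟩ := hα
  simpa using hβ

lemma distToCode_prod {C : Set (Fin m → Q)} (hC : C.Nonempty) (ν : Fin ℓ × Fin m → Q) :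
    distToCode ν {γ : Fin ℓ × Fin m → Q | ∀ i, (fun j => γ (i, j)) ∈ C} =
      ∑ i, distToCode (fun j => ν (i, j)) C := by
  obtain ⟨c, hc⟩ := hC
  have hmem : ∀ i : Fin ℓ, ∃ β ∈ C,
      distToCode (fun j => ν (i, j)) C = hammingDist (fun j => ν (i, j)) β := by
    intro i
    exact Nat.sInf_mem (⟨_, c, hc, rfl⟩ :
      {d | ∃ β ∈ C, d = hammingDist (fun j => ν (i, j)) β}.Nonempty)
  choose β hβC hβd using hmem
  have hγ : (fun p : Fin ℓ × Fin m => β p.1 p.2) ∈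
      {γ : Fin ℓ × Fin m → Q | ∀ i, (fun j => γ (i, j)) ∈ C} := fun i => hβC i
  apply le_antisymm
  · calc distToCode ν _ ≤ hammingDist ν (fun p => β p.1 p.2) := Nat.sInf_le ⟨_, hγ, rfl⟩
      _ = ∑ i, distToCode (fun j => ν (i, j)) C := by
          rw [hdist_block_sum]
          exact Finset.sum_congr rfl fun i _ => (hβd i).symm
  · refine le_csInf ⟨_, ⟨_, hγ, rfl⟩⟩ ?_
    rintro d ⟨α, hα, rfl⟩
    rw [hdist_block_sum]
    exact Finset.sum_le_sum fun i _ => Nat.sInf_le ⟨_, hα i, rfl⟩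

lemma distToCode_eq_zero {ι : Type*} [Fintype ι] {C : Set (ι → Q)} (hC : C.Nonempty)
    {ν : ι → Q} (h : distToCode ν C = 0) : ν ∈ C := by
  obtain ⟨c, hc⟩ := hC
  have := Nat.sInf_mem (⟨_, c, hc, rfl⟩ : {d | ∃ β ∈ C, d = hammingDist ν β}.Nonempty)
  rw [distToCode] at h
  rw [h] at this
  obtain ⟨β, hβ, hd⟩ := this
  rw [eq_comm, hammingDist_eq_zero] at hd; exact hd ▸ hβ

lemma distToCode_zero_of_mem {ι : Type*} [Fintype ι] {C : Set (ι → Q)}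
    {ν : ι → Q} (h : ν ∈ C) : distToCode ν C = 0 :=
  Nat.le_zero.mp (Nat.sInf_le ⟨ν, h, by simp⟩)

end Helpers

section Main
variable {m ℓ : ℕ} {Q : Type*} [DecidableEq Q]

theorem stmt_12_aux (hℓ : 0 < ℓ)
    (X : Subgroup (Equiv.Perm (Fin m → Q))) (C : Set (Fin m → Q))
    (δ : ℕ) (hδ : minDist C = δ) (hNT : NbrTrans X C) :
    (∀ (xs : Fin ℓ → Equiv.Perm (Fin m → Q)) (τ : Equiv.Perm (Fin ℓ)),
      (∀ i, xs i ∈ X) → (⇑(wrAct xs τ)) ''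
        {γ : Fin ℓ × Fin m → Q | ∀ i : Fin ℓ, (fun j => γ (i, j)) ∈ C} =
        {γ : Fin ℓ × Fin m → Q | ∀ i : Fin ℓ, (fun j => γ (i, j)) ∈ C}) ∧
    (∀ γ₁ ∈ {γ : Fin ℓ × Fin m → Q | ∀ i : Fin ℓ, (fun j => γ (i, j)) ∈ C},
      ∀ γ₂ ∈ {γ : Fin ℓ × Fin m → Q | ∀ i : Fin ℓ, (fun j => γ (i, j)) ∈ C},
      ∃ (xs : Fin ℓ → Equiv.Perm (Fin m → Q))
      (τ : Equiv.Perm (Fin ℓ)), (∀ i, xs i ∈ X) ∧ wrAct xs τ γ₁ = γ₂) ∧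
    (∀ ν₁ ν₂ : Fin ℓ × Fin m → Q,
      distToCode ν₁ {γ : Fin ℓ × Fin m → Q | ∀ i : Fin ℓ, (fun j => γ (i, j)) ∈ C} = 1 →
      distToCode ν₂ {γ : Fin ℓ × Fin m → Q | ∀ i : Fin ℓ, (fun j => γ (i, j)) ∈ C} = 1 →
      ∃ (xs : Fin ℓ → Equiv.Perm (Fin m → Q)) (τ : Equiv.Perm (Fin ℓ)),
        (∀ i, xs i ∈ X) ∧ wrAct xs τ ν₁ = ν₂) ∧
    minDist {γ : Fin ℓ × Fin m → Q | ∀ i : Fin ℓ, (fun j => γ (i, j)) ∈ C} = δ := by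
  obtain ⟨hX1, hX2, hX3, hX4⟩ := hNT
  set PC : Set (Fin ℓ × Fin m → Q) :=
    {γ : Fin ℓ × Fin m → Q | ∀ i : Fin ℓ, (fun j => γ (i, j)) ∈ C} with hPC
  have i0 : Fin ℓ := ⟨0, hℓ⟩
  refine ⟨?_, ?_, ?_, ?_⟩
  · -- image
    intro xs τ hxs
    ext γ
    constructor
    · rintro ⟨β, hβ, rfl⟩ i
      exact mem_of_img hX2 (hxs (τ.symm i)) (hβ (τ.symm i))
    · intro hγ
      refine ⟨(wrAct xs τ).symm γ, fun k => ?_, Equiv.apply_symm_apply _ _⟩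
      exact symm_mem_of_img hX2 (hxs k) (hγ (τ k))
  · -- transitivity on the code
    intro γ₁ hγ₁ γ₂ hγ₂
    choose x hxX hxx using fun i => hX3 _ (hγ₁ i) _ (hγ₂ i)
    refine ⟨x, 1, hxX, wrAct_eq _ _ _ _ fun k => ?_⟩
    simpa using hxx k
  · -- transitivity on neighbours
    intro ν₁ ν₂ h₁ h₂
    have hCne : C.Nonempty := by
      by_contra hC
      rw [Set.not_nonempty_iff_eq_empty] at hC
      have hPCe : {d | ∃ β ∈ PC, d = hammingDist ν₁ β} = ∅ := by
        ext d
        simp only [Set.mem_setOf_eq, Set.mem_empty_iff_false, iff_false, not_exists]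
        rintro β ⟨hβ, -⟩
        exact absurd (hβ i0) (by simp [hC])
      rw [distToCode, hPCe, Nat.sInf_empty] at h₁
      exact one_ne_zero h₁.symm
    have key : ∀ ν : Fin ℓ × Fin m → Q, distToCode ν PC = 1 →
        ∃ k, distToCode (fun j => ν (k, j)) C = 1 ∧
          ∀ i, i ≠ k → (fun j => ν (i, j)) ∈ C := by
      intro ν hν
      rw [hPC, distToCode_prod hCne] at hν
      obtain ⟨k, hk⟩ : ∃ k, distToCode (fun j => ν (k, j)) C ≠ 0 := by
        by_contra h
        push_neg at h
        rw [Finset.sum_eq_zero (fun i _ => h i)] at hν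
        exact one_ne_zero hν.symm
      have hsplit : distToCode (fun j => ν (k, j)) C +
          ∑ i ∈ Finset.univ.erase k, distToCode (fun j => ν (i, j)) C = 1 := by
        rw [← hν]
        exact Finset.add_sum_erase Finset.univ
          (fun i => distToCode (fun j => ν (i, j)) C) (Finset.mem_univ k)
      have hk1 : distToCode (fun j => ν (k, j)) C = 1 := by omega
      have hrest : ∑ i ∈ Finset.univ.erase k, distToCode (fun j => ν (i, j)) C = 0 := by
        omega
      refine ⟨k, hk1, fun i hi => ?_⟩
      have := (Finset.sum_eq_zero_iff.mp hrest) i (Finset.mem_erase.mpr ⟨hi, Finset.mem_univ i⟩)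
      exact distToCode_eq_zero hCne this
    obtain ⟨i₁, h11, h12⟩ := key ν₁ h₁
    obtain ⟨i₂, h21, h22⟩ := key ν₂ h₂
    have hx : ∀ k : Fin ℓ, ∃ x ∈ X,
        x (fun j => ν₁ (k, j)) = fun j => ν₂ (Equiv.swap i₁ i₂ k, j) := by
      intro k
      by_cases hk : k = i₁
      · subst hk
        rw [Equiv.swap_apply_left]
        exact hX4 _ _ h11 h21
      · have hτk : Equiv.swap i₁ i₂ k ≠ i₂ := fun h =>
          hk ((Equiv.swap i₁ i₂).injective (h.trans (Equiv.swap_apply_left i₁ i₂).symm))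
        exact hX3 _ (h12 k hk) _ (h22 _ hτk)
    choose x hxX hxx using hx
    exact ⟨x, Equiv.swap i₁ i₂, hxX, wrAct_eq _ _ _ _ hxx⟩
  · -- minimum distance
    subst hδ
    have emb : ∀ d ∈ {d | ∃ α ∈ C, ∃ β ∈ C, α ≠ β ∧ d = hammingDist α β},
        d ∈ {d | ∃ α ∈ PC, ∃ β ∈ PC, α ≠ β ∧ d = hammingDist α β} := by
      rintro d ⟨α, hα, β, hβ, hne, rfl⟩
      refine ⟨fun p => α p.2, fun i => hα, fun p => if p.1 = i0 then β p.2 else α p.2,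
        fun i => ?_, ?_, ?_⟩
      · by_cases hi : i = i0 <;> simp [hi, hα, hβ]
      · intro h
        obtain ⟨j, hj⟩ := Function.ne_iff.mp hne
        exact hj (by simpa using congrFun h (i0, j))
      · rw [hdist_block_sum]
        rw [Finset.sum_eq_single_of_mem i0 (Finset.mem_univ _)]
        · simp
        · intro b _ hb
          simp [hb]
    have lb : ∀ d ∈ {d | ∃ α ∈ PC, ∃ β ∈ PC, α ≠ β ∧ d = hammingDist α β},
        minDist C ≤ d := by
      rintro d ⟨γ₁, hγ₁, γ₂, hγ₂, hne, rfl⟩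
      obtain ⟨p, hp⟩ := Function.ne_iff.mp hne
      have hblock : (fun j => γ₁ (p.1, j)) ≠ fun j => γ₂ (p.1, j) := by
        intro h
        exact hp (congrFun h p.2)
      calc minDist C ≤ hammingDist (fun j => γ₁ (p.1, j)) (fun j => γ₂ (p.1, j)) :=
            Nat.sInf_le ⟨_, hγ₁ p.1, _, hγ₂ p.1, hblock, rfl⟩
        _ ≤ hammingDist γ₁ γ₂ := by
            rw [hdist_block_sum]
            exact Finset.single_le_sum (f := fun i => hammingDist (fun j => γ₁ (i, j)) fun j => γ₂ (i, j))
              (fun i _ => Nat.zero_le _) (Finset.mem_univ p.1)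
    by_cases hS : {d | ∃ α ∈ C, ∃ β ∈ C, α ≠ β ∧ d = hammingDist α β}.Nonempty
    · have h1 : minDist PC ≤ minDist C := Nat.sInf_le (emb _ (Nat.sInf_mem hS))
      have hS2 : {d | ∃ α ∈ PC, ∃ β ∈ PC, α ≠ β ∧ d = hammingDist α β}.Nonempty :=
        ⟨_, emb _ (Nat.sInf_mem hS)⟩
      have h2 : minDist C ≤ minDist PC := lb _ (Nat.sInf_mem hS2)
      exact le_antisymm h1 h2
    · rw [Set.not_nonempty_iff_eq_empty] at hS
      have hS2 : {d | ∃ α ∈ PC, ∃ β ∈ PC, α ≠ β ∧ d = hammingDist α β} = ∅ := by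
        rw [Set.eq_empty_iff_forall_notMem]
        rintro d ⟨γ₁, hγ₁, γ₂, hγ₂, hne, rfl⟩
        obtain ⟨p, hp⟩ := Function.ne_iff.mp hne
        have hblock : (fun j => γ₁ (p.1, j)) ≠ fun j => γ₂ (p.1, j) := by
          intro h
          exact hp (congrFun h p.2)
        exact Set.eq_empty_iff_forall_notMem.mp hS _ ⟨_, hγ₁ p.1, _, hγ₂ p.1, hblock, rfl⟩
      rw [minDist, minDist, hS, hS2]

end Main

/-- If `C` is `X`-neighbour transitive with minimum distance `δ`, then
`Prod_ℓ(C)` is `(X wr S_ℓ)`-neighbour transitive with minimum distance `δ`. -/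
theorem stmt_12 {m ℓ : ℕ} {Q : Type*} [DecidableEq Q] (hℓ : 0 < ℓ)
    (X : Subgroup (Equiv.Perm (Fin m → Q))) (C : Set (Fin m → Q))
    (δ : ℕ) (hδ : minDist C = δ) (hNT : NbrTrans X C) :
    let PC : Set (Fin ℓ × Fin m → Q) := {γ | ∀ i : Fin ℓ, (fun j => γ (i, j)) ∈ C}
    (∀ (xs : Fin ℓ → Equiv.Perm (Fin m → Q)) (τ : Equiv.Perm (Fin ℓ)),
      (∀ i, xs i ∈ X) → (⇑(wrAct xs τ)) '' PC = PC) ∧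
    (∀ γ₁ ∈ PC, ∀ γ₂ ∈ PC, ∃ (xs : Fin ℓ → Equiv.Perm (Fin m → Q))
      (τ : Equiv.Perm (Fin ℓ)), (∀ i, xs i ∈ X) ∧ wrAct xs τ γ₁ = γ₂) ∧
    (∀ ν₁ ν₂ : Fin ℓ × Fin m → Q, distToCode ν₁ PC = 1 → distToCode ν₂ PC = 1 →
      ∃ (xs : Fin ℓ → Equiv.Perm (Fin m → Q)) (τ : Equiv.Perm (Fin ℓ)),
        (∀ i, xs i ∈ X) ∧ wrAct xs τ ν₁ = ν₂) ∧
    minDist PC = δ := by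
  intro PC
  exact stmt_12_aux hℓ X C δ hδ hNT
end
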